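/- arXiv:0901.4872 — 2 statements merged into one kernel-verified Lean document; each statement's English description precedes it below -/
import Mathlib

section
/- Let (S, [·,·]_S) be a complex vector space with an s.i.p., and let T be a complex vector space with a map [·,·]_T : T × T → ℂ such that −[·,·]_T is an s.i.p. on T. Define [(s₁,t₁),(s₂,t₂)]⁻ := [s₁,s₂]_S − [t₁,t₂]_T on the product space S × T. Then [·,·]⁻ is an s.i.p. on S × T; in particular, it is additive and homogeneous in the first argument, conjugate-homogeneous in the second argument, satisfies [(s,t),(s,t)]⁻ > 0 for (s,t) ≠ (0,0), and satisfies the Cauchy–Schwarz inequality |[(s₁,t₁),(s₂,t₂)]⁻|² ≤ [(s₁,t₁),(s₁,t₁)]⁻ · [(s₂,t₂),(s₂,t₂)]⁻. -/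
/-!
The form `[(s₁,t₁),(s₂,t₂)]⁻` is the sum of the s.i.p. `[·,·]_S` on the first factor and the
s.i.p. `-[·,·]_T` on the second, so linearity and positivity hold factorwise. For Cauchy–Schwarz,
the triangle inequality gives `|[x,y]⁻| ≤ a + b` with `a² ≤ AC`, `b² ≤ BD` from the two factors,
and `(a + b)² ≤ (A + B)(C + D)` because `(ab)² ≤ (AD)(BC)`, whence `2ab ≤ AD + BC` by AM–GM.
-/

structure IsSemiInnerProduct {V : Type*} [AddCommGroup V] [Module ℂ V] (ip : V → V → ℂ) :
    Prop where
  add_left : ∀ x y z : V, ip (x + y) z = ip x z + ip y z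
  smul_left : ∀ (c : ℂ) (x y : V), ip (c • x) y = c * ip x y
  self_pos : ∀ x : V, x ≠ 0 → 0 < (ip x x).re ∧ (ip x x).im = 0
  norm_sq_le : ∀ x y : V, ‖ip x y‖ ^ 2 ≤ (ip x x).re * (ip y y).re
  smul_right : ∀ (c : ℂ) (x y : V), ip x (c • y) = starRingEnd ℂ c * ip x y

theorem add_sq_le_add_mul_add_of_sq_le {a b A B C D : ℝ} (ha : 0 ≤ a) (hb : 0 ≤ b)
    (hA : 0 ≤ A) (hB : 0 ≤ B) (hC : 0 ≤ C) (hD : 0 ≤ D)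
    (hac : a ^ 2 ≤ A * C) (hbd : b ^ 2 ≤ B * D) :
    (a + b) ^ 2 ≤ (A + B) * (C + D) := by
  have hab : (a * b) ^ 2 ≤ (A * D) * (B * C) := by
    calc (a * b) ^ 2 = a ^ 2 * b ^ 2 := by ring
      _ ≤ (A * C) * (B * D) := mul_le_mul hac hbd (sq_nonneg b) (mul_nonneg hA hC)
      _ = (A * D) * (B * C) := by ring
  have hcross : 2 * (a * b) ≤ A * D + B * C := by
    have hsq : (2 * (a * b)) ^ 2 ≤ (A * D + B * C) ^ 2 := by
      nlinarith [sq_nonneg (A * D - B * C)]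
    exact (pow_le_pow_iff_left₀ (by positivity) (by positivity) two_ne_zero).1 hsq
  nlinarith

namespace IsSemiInnerProduct

variable {V : Type*} [AddCommGroup V] [Module ℂ V] {ip : V → V → ℂ}

theorem zero_left (h : IsSemiInnerProduct ip) (y : V) : ip 0 y = 0 := by
  simpa using h.add_left 0 0 y

theorem re_self_nonneg (h : IsSemiInnerProduct ip) (x : V) : 0 ≤ (ip x x).re := by
  rcases eq_or_ne x 0 with rfl | hx
  · simp [h.zero_left]
  · exact (h.self_pos x hx).1.le

theorem im_self_eq_zero (h : IsSemiInnerProduct ip) (x : V) : (ip x x).im = 0 := by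
  rcases eq_or_ne x 0 with rfl | hx
  · simp [h.zero_left]
  · exact (h.self_pos x hx).2

variable {W : Type*} [AddCommGroup W] [Module ℂ W] {ip' : W → W → ℂ}

theorem prod (h : IsSemiInnerProduct ip) (h' : IsSemiInnerProduct ip') :
    IsSemiInnerProduct fun p q : V × W => ip p.1 q.1 + ip' p.2 q.2 where
  add_left x y z := by
    simp only [Prod.fst_add, Prod.snd_add, h.add_left, h'.add_left]; ring
  smul_left c x y := by
    simp only [Prod.smul_fst, Prod.smul_snd, h.smul_left, h'.smul_left]; ring
  smul_right c x y := by
    simp only [Prod.smul_fst, Prod.smul_snd, h.smul_right, h'.smul_right]; ring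
  self_pos x hx := by
    refine ⟨?_, by simp [h.im_self_eq_zero, h'.im_self_eq_zero]⟩
    rw [Complex.add_re]
    rcases eq_or_ne x.1 0 with h1 | h1
    · have h2 : x.2 ≠ 0 := fun h2 => hx (Prod.ext h1 h2)
      linarith [h.re_self_nonneg x.1, (h'.self_pos x.2 h2).1]
    · linarith [(h.self_pos x.1 h1).1, h'.re_self_nonneg x.2]
  norm_sq_le x y := by
    simp only [Complex.add_re]
    calc ‖ip x.1 y.1 + ip' x.2 y.2‖ ^ 2 ≤ (‖ip x.1 y.1‖ + ‖ip' x.2 y.2‖) ^ 2 := by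
          gcongr; exact norm_add_le _ _
      _ ≤ _ := add_sq_le_add_mul_add_of_sq_le (norm_nonneg _) (norm_nonneg _)
          (h.re_self_nonneg _) (h'.re_self_nonneg _) (h.re_self_nonneg _)
          (h'.re_self_nonneg _) (h.norm_sq_le _ _) (h'.norm_sq_le _ _)

end IsSemiInnerProduct

/-- If `(S, ipS)` is a complex s.i.p. space and `-ipT` is an s.i.p. on `T`, then
`[(s₁,t₁),(s₂,t₂)]⁻ := ipS s₁ s₂ - ipT t₁ t₂` is an s.i.p. on `S × T`: it is additive and
homogeneous in the first argument, conjugate-homogeneous in the second, positive on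
nonzero vectors, and satisfies the Cauchy–Schwarz inequality. -/
theorem stmt_2 {S T : Type*} [AddCommGroup S] [Module ℂ S] [AddCommGroup T] [Module ℂ T]
    (ipS : S → S → ℂ) (ipT : T → T → ℂ)
    (hS_add : ∀ x y z : S, ipS (x + y) z = ipS x z + ipS y z)
    (hS_sm1 : ∀ (c : ℂ) (x y : S), ipS (c • x) y = c * ipS x y)
    (hS_pos : ∀ x : S, x ≠ 0 → 0 < (ipS x x).re ∧ (ipS x x).im = 0)
    (hS_cs : ∀ x y : S, ‖ipS x y‖ ^ 2 ≤ (ipS x x).re * (ipS y y).re)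
    (hS_sm2 : ∀ (c : ℂ) (x y : S), ipS x (c • y) = (starRingEnd ℂ) c * ipS x y)
    (hT_add : ∀ x y z : T, -ipT (x + y) z = -ipT x z + -ipT y z)
    (hT_sm1 : ∀ (c : ℂ) (x y : T), -ipT (c • x) y = c * -ipT x y)
    (hT_pos : ∀ x : T, x ≠ 0 → 0 < (-ipT x x).re ∧ (-ipT x x).im = 0)
    (hT_cs : ∀ x y : T, ‖-ipT x y‖ ^ 2 ≤ (-ipT x x).re * (-ipT y y).re)
    (hT_sm2 : ∀ (c : ℂ) (x y : T), -ipT x (c • y) = (starRingEnd ℂ) c * -ipT x y)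
    (ipm : S × T → S × T → ℂ)
    (hipm : ∀ p q : S × T, ipm p q = ipS p.1 q.1 - ipT p.2 q.2) :
    (∀ x y z : S × T, ipm (x + y) z = ipm x z + ipm y z) ∧
    (∀ (c : ℂ) (x y : S × T), ipm (c • x) y = c * ipm x y) ∧
    (∀ (c : ℂ) (x y : S × T), ipm x (c • y) = (starRingEnd ℂ) c * ipm x y) ∧
    (∀ x : S × T, x ≠ 0 → 0 < (ipm x x).re ∧ (ipm x x).im = 0) ∧
    (∀ x y : S × T, ‖ipm x y‖ ^ 2 ≤ (ipm x x).re * (ipm y y).re) := by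
  have hS : IsSemiInnerProduct ipS := ⟨hS_add, hS_sm1, hS_pos, hS_cs, hS_sm2⟩
  have hT : IsSemiInnerProduct fun x y => -ipT x y := ⟨hT_add, hT_sm1, hT_pos, hT_cs, hT_sm2⟩
  have hipm' : ipm = fun p q => ipS p.1 q.1 + -ipT p.2 q.2 := by
    funext p q; rw [hipm, sub_eq_add_neg]
  obtain ⟨hadd, hsmul, hpos, hcs, hsmul'⟩ := hipm' ▸ hS.prod hT
  exact ⟨hadd, hsmul, hsmul', hpos, hcs⟩
end

section
/- Let S be a real vector space with a real s.i.p. [·,·], let V = S × ℝ carry the Minkowski product [(s₁,t₁),(s₂,t₂)]⁺ := [s₁,s₂] − t₁t₂, and let v = (s, √(1 + [s,s])) be a point of the upper sheet of the imaginary unit sphere H. Then a vector u = (s', t') ∈ V satisfies [u, v]⁺ = 0 if and only if t' = [s', s] / √(1 + [s,s]). Consequently the orthogonal complement v^⊥ = {u ∈ V : [u,v]⁺ = 0} coincides with the set of tangent vectors α(e, f'_e(s)) (α ∈ ℝ, e a unit vector of S) of the hypersurface H at v, where f(s) = √(1 + [s,s]) and f'_e(s) = [e,s]/√(1+[s,s]).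 -/
/-!
Since `√(1 + [s,s]) > 0`, orthogonality to `v` solves uniquely for the time coordinate,
`t' = [s',s]/√(1 + [s,s])`, which is linear in `s'`. Writing `s' = α e` with `e` a unit vector
(`e = s'/√[s',s']`, or any unit vector when `s' = 0`) turns `(s', t')` into `α (e, f'_e(s))`.
-/

section SemiInnerProduct

variable {S : Type*} [AddCommGroup S] [Module ℝ S] {ip : S → S → ℝ}

theorem ip_zero_left (h_sm1 : ∀ (c : ℝ) (x y : S), ip (c • x) y = c * ip x y) (y : S) :
    ip 0 y = 0 := by
  simpa using h_sm1 0 0 y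

theorem ip_self_nonneg (h_sm1 : ∀ (c : ℝ) (x y : S), ip (c • x) y = c * ip x y)
    (h_pos : ∀ x : S, x ≠ 0 → 0 < ip x x) (x : S) : 0 ≤ ip x x := by
  rcases eq_or_ne x 0 with rfl | hx
  · exact (ip_zero_left h_sm1 0).ge
  · exact (h_pos x hx).le

theorem ip_self_inv_sqrt_smul (h_sm1 : ∀ (c : ℝ) (x y : S), ip (c • x) y = c * ip x y)
    (h_sm2 : ∀ (c : ℝ) (x y : S), ip x (c • y) = c * ip x y) {x : S} (hx : 0 < ip x x) :
    ip ((√(ip x x))⁻¹ • x) ((√(ip x x))⁻¹ • x) = 1 := by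
  have hsq : √(ip x x) * √(ip x x) = ip x x := Real.mul_self_sqrt hx.le
  rw [h_sm1, h_sm2, ← mul_assoc, ← mul_inv, hsq, inv_mul_cancel₀ hx.ne']

theorem exists_ip_self_eq_one_and_smul_eq [Nontrivial S]
    (h_sm1 : ∀ (c : ℝ) (x y : S), ip (c • x) y = c * ip x y)
    (h_sm2 : ∀ (c : ℝ) (x y : S), ip x (c • y) = c * ip x y)
    (h_pos : ∀ x : S, x ≠ 0 → 0 < ip x x) (x : S) :
    ∃ (α : ℝ) (e : S), ip e e = 1 ∧ α • e = x := by
  rcases eq_or_ne x 0 with rfl | hx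
  · obtain ⟨y, hy⟩ := exists_ne (0 : S)
    exact ⟨0, _, ip_self_inv_sqrt_smul h_sm1 h_sm2 (h_pos y hy), zero_smul ℝ _⟩
  · have hsqrt : √(ip x x) ≠ 0 := (Real.sqrt_pos.mpr (h_pos x hx)).ne'
    exact ⟨_, _, ip_self_inv_sqrt_smul h_sm1 h_sm2 (h_pos x hx), smul_inv_smul₀ hsqrt x⟩

end SemiInnerProduct

theorem stmt_11_general {S : Type*} [AddCommGroup S] [Module ℝ S] [Nontrivial S]
    (ip : S → S → ℝ)
    (h_sm1 : ∀ (c : ℝ) (x y : S), ip (c • x) y = c * ip x y)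
    (h_sm2 : ∀ (c : ℝ) (x y : S), ip x (c • y) = c * ip x y)
    (h_pos : ∀ x : S, x ≠ 0 → 0 < ip x x)
    (s : S) :
    (∀ (s' : S) (t' : ℝ),
      ip s' s - t' * Real.sqrt (1 + ip s s) = 0 ↔
        t' = ip s' s / Real.sqrt (1 + ip s s)) ∧
    {u : S × ℝ | ip u.1 s - u.2 * Real.sqrt (1 + ip s s) = 0} =
      {u : S × ℝ | ∃ (α : ℝ) (e : S), ip e e = 1 ∧
        u = α • ((e, ip e s / Real.sqrt (1 + ip s s)) : S × ℝ)} := by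
  have hr : √(1 + ip s s) ≠ 0 :=
    (Real.sqrt_pos.mpr (by linarith [ip_self_nonneg h_sm1 h_pos s])).ne'
  have horth : ∀ (s' : S) (t' : ℝ),
      ip s' s - t' * √(1 + ip s s) = 0 ↔ t' = ip s' s / √(1 + ip s s) := fun s' t' => by
    rw [sub_eq_zero, eq_div_iff hr, eq_comm]
  refine ⟨horth, ?_⟩
  ext ⟨s', t'⟩
  simp only [Set.mem_ofPred_eq, horth, Prod.smul_mk, Prod.mk.injEq, smul_eq_mul]
  constructor
  · rintro rfl
    obtain ⟨α, e, he, rfl⟩ := exists_ip_self_eq_one_and_smul_eq h_sm1 h_sm2 h_pos s'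
    exact ⟨α, e, he, rfl, by rw [h_sm1, mul_div_assoc]⟩
  · rintro ⟨α, e, -, rfl, rfl⟩
    rw [h_sm1, mul_div_assoc]

/-- Let `v = (s, √(1+[s,s]))` be a point of the upper sheet of the imaginary unit sphere
of the generalized space-time model `S × ℝ`. A vector `u = (s',t')` is orthogonal to `v`
(`[u,v]⁺ = 0`) iff `t' = [s',s]/√(1+[s,s])`; consequently the orthogonal complement `v^⊥`
equals the set of tangent vectors `α·(e, f'_e(s))` (`α ∈ ℝ`, `e` a unit vector of `S`,
`f'_e(s) = [e,s]/√(1+[s,s])`) of the hypersurface `H` at `v`. -/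
theorem stmt_11 {S : Type*} [AddCommGroup S] [Module ℝ S] [Nontrivial S]
    (ip : S → S → ℝ)
    (h_add : ∀ x y z : S, ip (x + y) z = ip x z + ip y z)
    (h_sm1 : ∀ (c : ℝ) (x y : S), ip (c • x) y = c * ip x y)
    (h_sm2 : ∀ (c : ℝ) (x y : S), ip x (c • y) = c * ip x y)
    (h_pos : ∀ x : S, x ≠ 0 → 0 < ip x x)
    (h_cs : ∀ x y : S, ip x y ^ 2 ≤ ip x x * ip y y)
    (s : S) :
    (∀ (s' : S) (t' : ℝ),
      ip s' s - t' * Real.sqrt (1 + ip s s) = 0 ↔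
        t' = ip s' s / Real.sqrt (1 + ip s s)) ∧
    {u : S × ℝ | ip u.1 s - u.2 * Real.sqrt (1 + ip s s) = 0} =
      {u : S × ℝ | ∃ (α : ℝ) (e : S), ip e e = 1 ∧
        u = α • ((e, ip e s / Real.sqrt (1 + ip s s)) : S × ℝ)} :=
  stmt_11_general ip h_sm1 h_sm2 h_pos s
end
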